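/- arXiv:1803.01718 — 4 statements merged into one kernel-verified Lean document; each statement's English description precedes it below -/
import Mathlib

section
/- Let E be a Banach space and 1 ≤ p, q < ∞. The space ℓ_{q,p}^mid(E) of mid (q,p)-summable sequences in E, equipped with the norm ‖·‖_{q,p}, is a Banach space (i.e., it is complete). -/
open NormedSpace MeasureTheory

noncomputable section

/-- A sequence `x` in `E` is weakly `p`-summable: `∑_j |φ(x_j)|^p < ∞` for all `φ ∈ E*`. -/
def WeaklySummable (𝕜 : Type*) [RCLike 𝕜] {E : Type*} [NormedAddCommGroup E]
    [NormedSpace 𝕜 E] (p : ℝ) (x : ℕ → E) : Prop :=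
  ∀ φ : StrongDual 𝕜 E, Summable fun j => ‖φ (x j)‖ ^ p

/-- The weak `p`-norm of a sequence: `sup_{φ ∈ B_{E*}} (∑_j |φ(x_j)|^p)^{1/p}`. -/
def weakNorm (𝕜 : Type*) [RCLike 𝕜] {E : Type*} [NormedAddCommGroup E]
    [NormedSpace 𝕜 E] (p : ℝ) (x : ℕ → E) : ℝ :=
  ⨆ φ : {φ : StrongDual 𝕜 E // ‖φ‖ ≤ 1}, (∑' j, ‖φ.1 (x j)‖ ^ p) ^ (1 / p)

/-- A sequence `x` in `E` is mid `(q,p)`-summable: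
`∑_j (∑_n |x_n^*(x_j)|^p)^{q/p} < ∞` for every weakly `p`-summable sequence `(x_n^*)` in `E*`. -/
def MidSummable (𝕜 : Type*) [RCLike 𝕜] {E : Type*} [NormedAddCommGroup E]
    [NormedSpace 𝕜 E] (q p : ℝ) (x : ℕ → E) : Prop :=
  ∀ xs : ℕ → StrongDual 𝕜 E, WeaklySummable 𝕜 p xs →
    Summable fun j => (∑' n, ‖xs n (x j)‖ ^ p) ^ (q / p)

/-- The mid `(q,p)`-norm:
`sup over (x_n^*) in the closed unit ball of ℓ_p^w(E*)` of
`(∑_j (∑_n |x_n^*(x_j)|^p)^{q/p})^{1/q}`. -/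
def midNorm (𝕜 : Type*) [RCLike 𝕜] {E : Type*} [NormedAddCommGroup E]
    [NormedSpace 𝕜 E] (q p : ℝ) (x : ℕ → E) : ℝ :=
  ⨆ xs : {xs : ℕ → StrongDual 𝕜 E // WeaklySummable 𝕜 p xs ∧ weakNorm 𝕜 p xs ≤ 1},
    (∑' j, (∑' n, ‖xs.1 n (x j)‖ ^ p) ^ (q / p)) ^ (1 / q)

/-- `u : X → Y` is absolutely `p`-summing: there is `C > 0` with
`(∑_{j=1}^k ‖u(x_j)‖^p)^{1/p} ≤ C sup_{φ ∈ B_{X*}} (∑_{j=1}^k |φ(x_j)|^p)^{1/p}`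
for all finite families. -/
def AbsolutelySumming (𝕜 : Type*) [RCLike 𝕜] {X Y : Type*} [NormedAddCommGroup X]
    [NormedSpace 𝕜 X] [NormedAddCommGroup Y] [NormedSpace 𝕜 Y] (p : ℝ)
    (u : X →L[𝕜] Y) : Prop :=
  ∃ C > 0, ∀ (k : ℕ) (z : Fin k → X),
    (∑ j, ‖u (z j)‖ ^ p) ^ (1 / p) ≤
      C * ⨆ φ : {φ : StrongDual 𝕜 X // ‖φ‖ ≤ 1}, (∑ j, ‖φ.1 (z j)‖ ^ p) ^ (1 / p)

/-- The `p`-summing norm `π_p(u)`: the least admissible constant. -/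
def piNorm (𝕜 : Type*) [RCLike 𝕜] {X Y : Type*} [NormedAddCommGroup X]
    [NormedSpace 𝕜 X] [NormedAddCommGroup Y] [NormedSpace 𝕜 Y] (p : ℝ)
    (u : X →L[𝕜] Y) : ℝ :=
  sInf {C : ℝ | 0 < C ∧ ∀ (k : ℕ) (z : Fin k → X),
    (∑ j, ‖u (z j)‖ ^ p) ^ (1 / p) ≤
      C * ⨆ φ : {φ : StrongDual 𝕜 X // ‖φ‖ ≤ 1}, (∑ j, ‖φ.1 (z j)‖ ^ p) ^ (1 / p)}

variable {𝕜 E F : Type*}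

/-! The closed graph theorem makes the coefficient map `Φ ↦ (Φ (x_n))ₙ` of a weakly `p`-summable
sequence bounded into `ℓ^p`, so the weak norm is finite and controls every `∑_n |Φ(x_n)|^p`.
Hence a mid summable `x` has finite mid norm: unit-ball families `xs k` whose mixed sums exceed
`4^{kq}` could be glued, with weights `2^{-k}`, into a single weakly `p`-summable family along
which `x` would not be summable. Testing against one norming functional gives
`‖x_j‖ ≤ ‖x‖_{q,p}`, so a Cauchy sequence `(u m)` converges coordinatewise to some `v`. The mixed
sums are lower semicontinuous under coordinatewise convergence, so the Cauchy estimates pass to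
the limit: `‖u m - v‖_{q,p} → 0`, and, after rescaling test families into the unit ball,
`v = u N - (u N - v)` is mid summable. -/

open Filter Topology

lemma norm_smul_rpow [RCLike 𝕜] [NormedAddCommGroup E] [NormedSpace 𝕜 E] (c : 𝕜) (y : E)
    (p : ℝ) : ‖c • y‖ ^ p = ‖c‖ ^ p * ‖y‖ ^ p := by
  rw [norm_smul, Real.mul_rpow (norm_nonneg _) (norm_nonneg _)]

lemma rpow_mul_rpow_div {c a p : ℝ} (hc : 0 ≤ c) (ha : 0 ≤ a) (hp : p ≠ 0) (r : ℝ) :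
    (c ^ p * a) ^ (r / p) = c ^ r * a ^ (r / p) := by
  rw [Real.mul_rpow (Real.rpow_nonneg hc _) ha, ← Real.rpow_mul hc, mul_div_cancel₀ r hp]

lemma add_rpow_le_two_rpow_mul {s t r : ℝ} (hs : 0 ≤ s) (ht : 0 ≤ t) (hr : 0 ≤ r) :
    (s + t) ^ r ≤ 2 ^ r * (s ^ r + t ^ r) := by
  have hmax : max s t ^ r ≤ s ^ r + t ^ r := by
    rcases le_total s t with h | h
    · rw [max_eq_right h]; linarith [Real.rpow_nonneg hs r]
    · rw [max_eq_left h]; linarith [Real.rpow_nonneg ht r]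
  calc (s + t) ^ r ≤ (2 * max s t) ^ r := by gcongr; linarith [le_max_left s t, le_max_right s t]
    _ = 2 ^ r * max s t ^ r := Real.mul_rpow zero_le_two (le_max_of_le_left hs)
    _ ≤ 2 ^ r * (s ^ r + t ^ r) := by gcongr

section WeaklySummable

variable [RCLike 𝕜] {X : Type*} [NormedAddCommGroup X] [NormedSpace 𝕜 X] {p : ℝ}

lemma WeaklySummable.summable_apply [NormedAddCommGroup E] [NormedSpace 𝕜 E]
    {xs : ℕ → StrongDual 𝕜 E} (hxs : WeaklySummable 𝕜 p xs) (y : E) :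
    Summable fun n => ‖xs n y‖ ^ p :=
  hxs (inclusionInDoubleDual 𝕜 E y)

lemma WeaklySummable.smul {x : ℕ → X} (hx : WeaklySummable 𝕜 p x) (c : 𝕜) :
    WeaklySummable 𝕜 p (c • x) := fun Φ => by
  simpa only [Pi.smul_apply, map_smul, norm_smul_rpow] using (hx Φ).mul_left (‖c‖ ^ p)

lemma weakNorm_nonneg (x : ℕ → X) : 0 ≤ weakNorm 𝕜 p x :=
  Real.iSup_nonneg fun _ => by positivity

def WeaklySummable.toLp [Fact (1 ≤ ENNReal.ofReal p)] {x : ℕ → X}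
    (hx : WeaklySummable 𝕜 p x) : StrongDual 𝕜 X →ₗ[𝕜] lp (fun _ : ℕ => 𝕜) (ENNReal.ofReal p) where
  toFun Φ := ⟨fun n => Φ (x n), memℓp_gen <| by
    rw [ENNReal.toReal_ofReal (zero_le_one.trans (ENNReal.one_le_ofReal.mp Fact.out))]
    exact hx Φ⟩
  map_add' _ _ := rfl
  map_smul' _ _ := rfl

section ToLp

variable [Fact (1 ≤ ENNReal.ofReal p)] {x : ℕ → X}

lemma WeaklySummable.norm_toLp (hx : WeaklySummable 𝕜 p x) (Φ : StrongDual 𝕜 X) :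
    ‖hx.toLp Φ‖ = (∑' n, ‖Φ (x n)‖ ^ p) ^ (1 / p) := by
  have hp : 0 < p := zero_lt_one.trans_le (ENNReal.one_le_ofReal.mp Fact.out)
  rw [lp.norm_eq_tsum_rpow (by rwa [ENNReal.toReal_ofReal hp.le]), ENNReal.toReal_ofReal hp.le]
  rfl

lemma WeaklySummable.continuous_toLp (hx : WeaklySummable 𝕜 p x) : Continuous hx.toLp := by
  refine hx.toLp.continuous_of_seq_closed_graph fun Φ Ψ y hΦ hy => ?_
  ext n
  have hcoord : Tendsto (fun k => hx.toLp (Φ k) n) atTop (𝓝 (y n)) :=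
    ((lp.evalCLM 𝕜 (fun _ : ℕ => 𝕜) (ENNReal.ofReal p) n).continuous.tendsto y).comp hy
  exact tendsto_nhds_unique hcoord (((ContinuousLinearMap.apply 𝕜 𝕜 (x n)).continuous.tendsto
    Ψ).comp hΦ)

end ToLp

lemma WeaklySummable.rpow_tsum_le_weakNorm_mul (hp : 1 ≤ p) {x : ℕ → X}
    (hx : WeaklySummable 𝕜 p x) (Φ : StrongDual 𝕜 X) :
    (∑' n, ‖Φ (x n)‖ ^ p) ^ (1 / p) ≤ weakNorm 𝕜 p x * ‖Φ‖ := by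
  have : Fact (1 ≤ ENNReal.ofReal p) := ⟨ENNReal.one_le_ofReal.mpr hp⟩
  let T : StrongDual 𝕜 X →L[𝕜] lp (fun _ : ℕ => 𝕜) (ENNReal.ofReal p) :=
    ⟨hx.toLp, hx.continuous_toLp⟩
  have hbdd : BddAbove (Set.range fun φ : {φ : StrongDual 𝕜 X // ‖φ‖ ≤ 1} =>
      (∑' n, ‖φ.1 (x n)‖ ^ p) ^ (1 / p)) := by
    refine ⟨‖T‖, ?_⟩
    rintro _ ⟨φ, rfl⟩
    dsimp only
    rw [← hx.norm_toLp]
    exact (T.le_opNorm_of_le φ.2).trans_eq (mul_one _)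
  have hT : ‖T‖ ≤ weakNorm 𝕜 p x := T.opNorm_le_of_unit_norm (weakNorm_nonneg x)
    fun φ hφ => (hx.norm_toLp φ).trans_le (le_ciSup hbdd ⟨φ, hφ.le⟩)
  rw [← hx.norm_toLp]
  exact T.le_of_opNorm_le hT Φ

lemma WeaklySummable.tsum_rpow_le (hp : 1 ≤ p) {x : ℕ → X} (hx : WeaklySummable 𝕜 p x)
    (hx1 : weakNorm 𝕜 p x ≤ 1) (Φ : StrongDual 𝕜 X) :
    ∑' n, ‖Φ (x n)‖ ^ p ≤ ‖Φ‖ ^ p := by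
  have h := (hx.rpow_tsum_le_weakNorm_mul hp Φ).trans
    (mul_le_of_le_one_left (norm_nonneg Φ) hx1)
  rwa [one_div, Real.rpow_inv_le_iff_of_pos (by positivity) (norm_nonneg Φ) (by linarith)] at h

lemma WeaklySummable.weakNorm_smul_le (hp : 1 ≤ p) {x : ℕ → X} (hx : WeaklySummable 𝕜 p x)
    (c : 𝕜) : weakNorm 𝕜 p (c • x) ≤ ‖c‖ * weakNorm 𝕜 p x := by
  refine Real.iSup_le (fun φ => ?_) (mul_nonneg (norm_nonneg c) (weakNorm_nonneg x))
  simp only [Pi.smul_apply, map_smul, norm_smul_rpow, tsum_mul_left]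
  rw [rpow_mul_rpow_div (norm_nonneg c) (by positivity) (by linarith), Real.rpow_one]
  gcongr
  exact (hx.rpow_tsum_le_weakNorm_mul hp φ.1).trans
    (mul_le_of_le_one_right (weakNorm_nonneg x) φ.2)

end WeaklySummable

section Glue

variable [RCLike 𝕜] {X : Type*} [NormedAddCommGroup X] [NormedSpace 𝕜 X] {p : ℝ}

def glue (c : ℕ → 𝕜) (xs : ℕ → ℕ → X) (m : ℕ) : X :=
  c (Nat.pairEquiv.symm m).1 • xs (Nat.pairEquiv.symm m).1 (Nat.pairEquiv.symm m).2

lemma summable_glue_iff (c : ℕ → 𝕜) (xs : ℕ → ℕ → X) (Φ : StrongDual 𝕜 X) :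
    (Summable fun m => ‖Φ (glue c xs m)‖ ^ p) ↔
      Summable fun kn : ℕ × ℕ => ‖c kn.1‖ ^ p * ‖Φ (xs kn.1 kn.2)‖ ^ p := by
  simp only [glue, map_smul, norm_smul_rpow]
  exact Nat.pairEquiv.symm.summable_iff
    (f := fun kn : ℕ × ℕ => ‖c kn.1‖ ^ p * ‖Φ (xs kn.1 kn.2)‖ ^ p)

lemma tsum_glue (c : ℕ → 𝕜) (xs : ℕ → ℕ → X) (Φ : StrongDual 𝕜 X) :
    ∑' m, ‖Φ (glue c xs m)‖ ^ p = ∑' kn : ℕ × ℕ, ‖c kn.1‖ ^ p * ‖Φ (xs kn.1 kn.2)‖ ^ p := by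
  simp only [glue, map_smul, norm_smul_rpow]
  exact Nat.pairEquiv.symm.tsum_eq fun kn : ℕ × ℕ => ‖c kn.1‖ ^ p * ‖Φ (xs kn.1 kn.2)‖ ^ p

lemma weaklySummable_glue (hp : 1 ≤ p) {c : ℕ → 𝕜} {xs : ℕ → ℕ → X}
    (hxs : ∀ k, WeaklySummable 𝕜 p (xs k)) (hxs1 : ∀ k, weakNorm 𝕜 p (xs k) ≤ 1)
    (hc : Summable fun k => ‖c k‖ ^ p) : WeaklySummable 𝕜 p (glue c xs) := by
  intro Φ
  rw [summable_glue_iff, summable_prod_of_nonneg fun _ => by positivity]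
  dsimp only
  refine ⟨fun k => (hxs k Φ).mul_left _, (hc.mul_right (‖Φ‖ ^ p)).of_nonneg_of_le
    (fun k => tsum_nonneg fun _ => by positivity) fun k => ?_⟩
  rw [tsum_mul_left]
  gcongr
  exact (hxs k).tsum_rpow_le hp (hxs1 k) Φ

lemma WeaklySummable.rpow_mul_tsum_le_tsum_glue {c : ℕ → 𝕜} {xs : ℕ → ℕ → X}
    (hg : WeaklySummable 𝕜 p (glue c xs)) (Φ : StrongDual 𝕜 X) (k : ℕ) :
    ‖c k‖ ^ p * ∑' n, ‖Φ (xs k n)‖ ^ p ≤ ∑' m, ‖Φ (glue c xs m)‖ ^ p := by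
  rw [tsum_glue, ← tsum_mul_left]
  exact tsum_comp_le_tsum_of_inj ((summable_glue_iff c xs Φ).mp (hg Φ))
    (fun _ => by positivity) (Prod.mk_right_injective k)

end Glue

section MidSummable

variable [RCLike 𝕜] [NormedAddCommGroup E] [NormedSpace 𝕜 E] {p q : ℝ}

lemma midNorm_nonneg (x : ℕ → E) : 0 ≤ midNorm 𝕜 q p x :=
  Real.iSup_nonneg fun _ => by positivity

lemma MidSummable.sub (hp : 0 < p) (hq : 0 ≤ q) {x y : ℕ → E} (hx : MidSummable 𝕜 q p x)
    (hy : MidSummable 𝕜 q p y) : MidSummable 𝕜 q p (x - y) := by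
  intro xs hxs
  have hqp : 0 ≤ q / p := div_nonneg hq hp.le
  have hinner : ∀ j, ∑' n, ‖xs n ((x - y) j)‖ ^ p ≤
      2 ^ p * (∑' n, ‖xs n (x j)‖ ^ p + ∑' n, ‖xs n (y j)‖ ^ p) := fun j => by
    rw [← (hxs.summable_apply (x j)).tsum_add (hxs.summable_apply (y j)), ← tsum_mul_left]
    refine (hxs.summable_apply _).tsum_le_tsum (fun n => ?_)
      (((hxs.summable_apply (x j)).add (hxs.summable_apply (y j))).mul_left _)
    calc ‖xs n ((x - y) j)‖ ^ p ≤ (‖xs n (x j)‖ + ‖xs n (y j)‖) ^ p := by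
          gcongr
          rw [Pi.sub_apply, map_sub]
          exact norm_sub_le _ _
      _ ≤ _ := add_rpow_le_two_rpow_mul (norm_nonneg _) (norm_nonneg _) hp.le
  refine Summable.of_nonneg_of_le (fun j => by positivity) (fun j => ?_)
    ((((hx xs hxs).add (hy xs hxs)).mul_left (2 ^ (q / p))).mul_left (2 ^ q))
  set A := ∑' n, ‖xs n (x j)‖ ^ p
  set B := ∑' n, ‖xs n (y j)‖ ^ p
  have hA : 0 ≤ A := by positivity
  have hB : 0 ≤ B := by positivity
  calc (∑' n, ‖xs n ((x - y) j)‖ ^ p) ^ (q / p) ≤ (2 ^ p * (A + B)) ^ (q / p) := by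
        gcongr
        exact hinner j
    _ = 2 ^ q * (A + B) ^ (q / p) :=
        rpow_mul_rpow_div zero_le_two (add_nonneg hA hB) hp.ne' q
    _ ≤ 2 ^ q * (2 ^ (q / p) * (A ^ (q / p) + B ^ (q / p))) := by
        gcongr
        exact add_rpow_le_two_rpow_mul hA hB hqp

lemma MidSummable.of_weakNorm_le_one (hp : 1 ≤ p) {x : ℕ → E}
    (h : ∀ xs : ℕ → StrongDual 𝕜 E, WeaklySummable 𝕜 p xs → weakNorm 𝕜 p xs ≤ 1 →
      Summable fun j => (∑' n, ‖xs n (x j)‖ ^ p) ^ (q / p)) :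
    MidSummable 𝕜 q p x := by
  intro ys hys
  have hW : 0 ≤ weakNorm 𝕜 p ys := weakNorm_nonneg ys
  set c : 𝕜 := (((weakNorm 𝕜 p ys + 1)⁻¹ : ℝ) : 𝕜)
  have hc : ‖c‖ = (weakNorm 𝕜 p ys + 1)⁻¹ := by
    rw [RCLike.norm_ofReal, abs_of_pos (by positivity)]
  have hc0 : 0 < ‖c‖ := by rw [hc]; positivity
  have hcys : weakNorm 𝕜 p (c • ys) ≤ 1 := (hys.weakNorm_smul_le hp c).trans <| by
    rw [hc, inv_mul_le_one₀ (by positivity)]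
    linarith
  refine (summable_mul_left_iff (Real.rpow_pos_of_pos hc0 q).ne').mp
    ((h _ (hys.smul c) hcys).congr fun j => ?_)
  simp only [Pi.smul_apply, FunLike.coe_smul, norm_smul_rpow, tsum_mul_left]
  exact rpow_mul_rpow_div hc0.le (by positivity) (by linarith) q

lemma MidSummable.rpow_mul_tsum_le_tsum_glue (hp : 0 < p) (hq : 0 ≤ q) {x : ℕ → E}
    (hx : MidSummable 𝕜 q p x) {c : ℕ → 𝕜} {xs : ℕ → ℕ → StrongDual 𝕜 E}
    (hxs : ∀ k, WeaklySummable 𝕜 p (xs k)) (hg : WeaklySummable 𝕜 p (glue c xs)) (k : ℕ) :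
    ‖c k‖ ^ q * ∑' j, (∑' n, ‖xs k n (x j)‖ ^ p) ^ (q / p) ≤
      ∑' j, (∑' m, ‖glue c xs m (x j)‖ ^ p) ^ (q / p) := by
  rw [← tsum_mul_left]
  refine ((hx _ (hxs k)).mul_left _).tsum_le_tsum (fun j => ?_) (hx _ hg)
  rw [← rpow_mul_rpow_div (norm_nonneg _) (by positivity) hp.ne']
  gcongr
  exact hg.rpow_mul_tsum_le_tsum_glue (inclusionInDoubleDual 𝕜 E (x j)) k

lemma MidSummable.bddAbove (hp : 1 ≤ p) (hq : 0 < q) {x : ℕ → E} (hx : MidSummable 𝕜 q p x) :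
    BddAbove (Set.range fun xs : {xs : ℕ → StrongDual 𝕜 E //
        WeaklySummable 𝕜 p xs ∧ weakNorm 𝕜 p xs ≤ 1} =>
      (∑' j, (∑' n, ‖xs.1 n (x j)‖ ^ p) ^ (q / p)) ^ (1 / q)) := by
  by_contra hunb
  have hlarge : ∀ k : ℕ, ∃ xs : {xs : ℕ → StrongDual 𝕜 E //
      WeaklySummable 𝕜 p xs ∧ weakNorm 𝕜 p xs ≤ 1},
      (4 : ℝ) ^ k < (∑' j, (∑' n, ‖xs.1 n (x j)‖ ^ p) ^ (q / p)) ^ (1 / q) := fun k => by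
    simpa using not_bddAbove_iff.mp hunb (4 ^ k)
  choose xs hxs using hlarge
  -- glued with weights `2⁻ᵏ`, the `xs k` give one family with mixed sum above `2^{kq}` for all `k`
  set c : ℕ → 𝕜 := fun k => 2⁻¹ ^ k
  have hc : ∀ k, ‖c k‖ = 2⁻¹ ^ k := fun k => by simp [c]
  have hcp : Summable fun k => ‖c k‖ ^ p := by
    simp_rw [hc, ← Real.rpow_pow_comm (by norm_num : (0 : ℝ) ≤ 2⁻¹)]
    exact summable_geometric_of_lt_one (by positivity)
      (Real.rpow_lt_one (by norm_num) (by norm_num) (by linarith))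
  have hg := weaklySummable_glue hp (fun k => (xs k).2.1) (fun k => (xs k).2.2) hcp
  obtain ⟨k, hk⟩ := pow_unbounded_of_one_lt
    ((∑' j, (∑' m, ‖glue c (fun k => (xs k).1) m (x j)‖ ^ p) ^ (q / p)) ^ (1 / q)) one_lt_two
  have hle := Real.rpow_le_rpow (by positivity)
    (hx.rpow_mul_tsum_le_tsum_glue (by linarith) hq.le (fun k => (xs k).2.1) hg k)
    (by positivity : 0 ≤ 1 / q)
  rw [rpow_mul_rpow_div (norm_nonneg _) (by positivity) hq.ne', Real.rpow_one, hc] at hle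
  have hpow : (2 : ℝ) ^ k = 2⁻¹ ^ k * 4 ^ k := by
    rw [← mul_pow]
    norm_num
  have hlt := mul_lt_mul_of_pos_left (hxs k) (by positivity : (0 : ℝ) < 2⁻¹ ^ k)
  linarith

lemma MidSummable.rpow_tsum_le_midNorm (hp : 1 ≤ p) (hq : 0 < q) {x : ℕ → E}
    (hx : MidSummable 𝕜 q p x) {xs : ℕ → StrongDual 𝕜 E} (hxs : WeaklySummable 𝕜 p xs)
    (hxs1 : weakNorm 𝕜 p xs ≤ 1) :
    (∑' j, (∑' n, ‖xs n (x j)‖ ^ p) ^ (q / p)) ^ (1 / q) ≤ midNorm 𝕜 q p x :=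
  le_ciSup (hx.bddAbove hp hq) ⟨xs, hxs, hxs1⟩

lemma MidSummable.rpow_tsum_apply_le_midNorm (hp : 1 ≤ p) (hq : 0 < q) {x : ℕ → E}
    (hx : MidSummable 𝕜 q p x) {xs : ℕ → StrongDual 𝕜 E} (hxs : WeaklySummable 𝕜 p xs)
    (hxs1 : weakNorm 𝕜 p xs ≤ 1) (j : ℕ) :
    (∑' n, ‖xs n (x j)‖ ^ p) ^ (1 / p) ≤ midNorm 𝕜 q p x := by
  have hS : 0 ≤ ∑' n, ‖xs n (x j)‖ ^ p := by positivity
  calc (∑' n, ‖xs n (x j)‖ ^ p) ^ (1 / p)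
      = ((∑' n, ‖xs n (x j)‖ ^ p) ^ (q / p)) ^ (1 / q) := by
        rw [← Real.rpow_mul hS]
        congr 1
        field_simp
    _ ≤ (∑' j, (∑' n, ‖xs n (x j)‖ ^ p) ^ (q / p)) ^ (1 / q) := by
        gcongr
        exact (hx xs hxs).le_tsum j fun _ _ => by positivity
    _ ≤ midNorm 𝕜 q p x := hx.rpow_tsum_le_midNorm hp hq hxs hxs1

lemma MidSummable.norm_le_midNorm (hp : 1 ≤ p) (hq : 0 < q) {x : ℕ → E}
    (hx : MidSummable 𝕜 q p x) (j : ℕ) : ‖x j‖ ≤ midNorm 𝕜 q p x := by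
  rcases eq_or_ne (x j) 0 with h0 | h0
  · rw [h0, norm_zero]
    exact midNorm_nonneg x
  obtain ⟨ψ, hψ, hψx⟩ := exists_dual_vector 𝕜 (x j) (norm_ne_zero_iff.mpr h0)
  set xs : ℕ → StrongDual 𝕜 E := Pi.single 0 ψ
  have hsingle : ∀ Φ : StrongDual 𝕜 (StrongDual 𝕜 E),
      (fun n => ‖Φ (xs n)‖ ^ p) = Pi.single 0 (‖Φ ψ‖ ^ p) := fun Φ => by
    ext n
    rcases eq_or_ne n 0 with rfl | hn
    · simp [xs]
    · simp [xs, hn, Real.zero_rpow (by linarith : p ≠ 0)]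
  have hxs : WeaklySummable 𝕜 p xs := fun Φ => by
    rw [hsingle]
    exact (hasSum_pi_single 0 _).summable
  have hxs1 : weakNorm 𝕜 p xs ≤ 1 := Real.iSup_le (fun Φ => by
    rw [hsingle, tsum_pi_single, one_div, Real.rpow_rpow_inv (norm_nonneg _) (by linarith)]
    calc ‖Φ.1 ψ‖ ≤ ‖Φ.1‖ * ‖ψ‖ := Φ.1.le_opNorm ψ
      _ ≤ 1 := by rw [hψ, mul_one]; exact Φ.2) zero_le_one
  have h := hx.rpow_tsum_apply_le_midNorm hp hq hxs hxs1 j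
  have hev := hsingle (inclusionInDoubleDual 𝕜 E (x j))
  simp only [dual_def] at hev
  rwa [hev, tsum_pi_single, hψx, one_div,
    RCLike.norm_ofReal, abs_norm, Real.rpow_rpow_inv (norm_nonneg _) (by linarith)] at h

lemma midNorm_le_of_forall_tsum_le (hq : 0 < q) {x : ℕ → E} {ε : ℝ} (hε : 0 ≤ ε)
    (h : ∀ xs : ℕ → StrongDual 𝕜 E, WeaklySummable 𝕜 p xs → weakNorm 𝕜 p xs ≤ 1 →
      ∑' j, (∑' n, ‖xs n (x j)‖ ^ p) ^ (q / p) ≤ ε ^ q) :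
    midNorm 𝕜 q p x ≤ ε :=
  Real.iSup_le (fun xs => by
    rw [one_div, Real.rpow_inv_le_iff_of_pos (by positivity) hε hq]
    exact h xs.1 xs.2.1 xs.2.2) hε

/-- Fatou's lemma for the mixed sums: they are lower semicontinuous under pointwise convergence. -/
lemma summable_and_tsum_le_of_tendsto (hp : 0 < p) (hq : 0 ≤ q) {xs : ℕ → StrongDual 𝕜 E}
    (hxs : WeaklySummable 𝕜 p xs) {w : ℕ → ℕ → E} {x : ℕ → E}
    (hw : ∀ j, Tendsto (fun i => w i j) atTop (𝓝 (x j))) {C : ℝ}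
    (hC : ∀ᶠ i in atTop, (Summable fun j => (∑' n, ‖xs n (w i j)‖ ^ p) ^ (q / p)) ∧
      ∑' j, (∑' n, ‖xs n (w i j)‖ ^ p) ^ (q / p) ≤ C) :
    (Summable fun j => (∑' n, ‖xs n (x j)‖ ^ p) ^ (q / p)) ∧
      ∑' j, (∑' n, ‖xs n (x j)‖ ^ p) ^ (q / p) ≤ C := by
  have hqp : 0 ≤ q / p := div_nonneg hq hp.le
  have hpartial : ∀ (J : Finset ℕ) (K : ℕ),
      ∑ j ∈ J, (∑ n ∈ Finset.range K, ‖xs n (x j)‖ ^ p) ^ (q / p) ≤ C := fun J K => by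
    refine le_of_tendsto (tendsto_finsetSum J fun j _ => (tendsto_finsetSum _ fun n _ =>
      ((((xs n).continuous.tendsto _).comp (hw j)).norm.rpow_const (Or.inr hp.le))).rpow_const
        (Or.inr hqp)) (hC.mono fun i hi => ?_)
    calc ∑ j ∈ J, (∑ n ∈ Finset.range K, ‖xs n (w i j)‖ ^ p) ^ (q / p)
        ≤ ∑ j ∈ J, (∑' n, ‖xs n (w i j)‖ ^ p) ^ (q / p) := by
          gcongr with j
          exact (hxs.summable_apply _).sum_le_tsum _ fun _ _ => by positivity
      _ ≤ ∑' j, (∑' n, ‖xs n (w i j)‖ ^ p) ^ (q / p) :=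
          hi.1.sum_le_tsum J fun _ _ => by positivity
      _ ≤ C := hi.2
  have hfinite : ∀ J : Finset ℕ, ∑ j ∈ J, (∑' n, ‖xs n (x j)‖ ^ p) ^ (q / p) ≤ C := fun J =>
    le_of_tendsto' (tendsto_finsetSum J fun j _ =>
      (hxs.summable_apply (x j)).hasSum.tendsto_sum_nat.rpow_const (Or.inr hqp)) (hpartial J)
  have hsum := summable_of_sum_le (fun _ => by positivity) hfinite
  exact ⟨hsum, hsum.tsum_le_of_sum_le hfinite⟩

lemma summable_and_tsum_le_of_tendsto_of_midNorm_le (hp : 1 ≤ p) (hq : 0 < q)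
    {w : ℕ → ℕ → E} {x : ℕ → E} (hw : ∀ i, MidSummable 𝕜 q p (w i))
    (hlim : ∀ j, Tendsto (fun i => w i j) atTop (𝓝 (x j))) {ε : ℝ} (hε : 0 ≤ ε)
    (hwε : ∀ᶠ i in atTop, midNorm 𝕜 q p (w i) ≤ ε) {xs : ℕ → StrongDual 𝕜 E}
    (hxs : WeaklySummable 𝕜 p xs) (hxs1 : weakNorm 𝕜 p xs ≤ 1) :
    (Summable fun j => (∑' n, ‖xs n (x j)‖ ^ p) ^ (q / p)) ∧
      ∑' j, (∑' n, ‖xs n (x j)‖ ^ p) ^ (q / p) ≤ ε ^ q :=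
  summable_and_tsum_le_of_tendsto (by linarith) hq.le hxs hlim <|
    hwε.mono fun i hi => ⟨hw i xs hxs, by
      rw [← Real.rpow_inv_le_iff_of_pos (by positivity) hε hq, ← one_div]
      exact ((hw i).rpow_tsum_le_midNorm hp hq hxs hxs1).trans hi⟩

lemma MidSummable.of_tendsto (hp : 1 ≤ p) (hq : 0 < q) {w : ℕ → ℕ → E} {x : ℕ → E}
    (hw : ∀ i, MidSummable 𝕜 q p (w i)) (hlim : ∀ j, Tendsto (fun i => w i j) atTop (𝓝 (x j)))
    {ε : ℝ} (hε : 0 ≤ ε) (hwε : ∀ᶠ i in atTop, midNorm 𝕜 q p (w i) ≤ ε) :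
    MidSummable 𝕜 q p x :=
  MidSummable.of_weakNorm_le_one hp fun _ hxs hxs1 =>
    (summable_and_tsum_le_of_tendsto_of_midNorm_le hp hq hw hlim hε hwε hxs hxs1).1

lemma midNorm_le_of_tendsto (hp : 1 ≤ p) (hq : 0 < q) {w : ℕ → ℕ → E} {x : ℕ → E}
    (hw : ∀ i, MidSummable 𝕜 q p (w i)) (hlim : ∀ j, Tendsto (fun i => w i j) atTop (𝓝 (x j)))
    {ε : ℝ} (hε : 0 ≤ ε) (hwε : ∀ᶠ i in atTop, midNorm 𝕜 q p (w i) ≤ ε) :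
    midNorm 𝕜 q p x ≤ ε :=
  midNorm_le_of_forall_tsum_le hq hε fun _ hxs hxs1 =>
    (summable_and_tsum_le_of_tendsto_of_midNorm_le hp hq hw hlim hε hwε hxs hxs1).2

end MidSummable

/-- the space `ℓ_{q,p}^mid(E)` is complete: every Cauchy sequence (for the mid
`(q,p)`-norm) of mid `(q,p)`-summable sequences converges in the mid `(q,p)`-norm to a mid
`(q,p)`-summable sequence. -/
theorem stmt11 [RCLike 𝕜] [NormedAddCommGroup E] [NormedSpace 𝕜 E] [CompleteSpace E]
    (p q : ℝ) (hp : 1 ≤ p) (hq : 1 ≤ q)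
    (u : ℕ → ℕ → E) (hmid : ∀ m, MidSummable 𝕜 q p (u m))
    (hcauchy : ∀ ε : ℝ, 0 < ε → ∃ N : ℕ, ∀ m ≥ N, ∀ n ≥ N,
      midNorm 𝕜 q p (fun j => u m j - u n j) < ε) :
    ∃ v : ℕ → E, MidSummable 𝕜 q p v ∧
      Filter.Tendsto (fun m => midNorm 𝕜 q p fun j => u m j - v j)
        Filter.atTop (nhds 0) := by
  have hp0 : 0 < p := by linarith
  have hq0 : 0 < q := by linarith
  have hdiff : ∀ m n, MidSummable 𝕜 q p (u m - u n) := fun m n =>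
    (hmid m).sub hp0 hq0.le (hmid n)
  have hcs : ∀ j, CauchySeq fun m => u m j := fun j => Metric.cauchySeq_iff.2 fun ε hε => by
    obtain ⟨N, hN⟩ := hcauchy ε hε
    exact ⟨N, fun m hm n hn => (dist_eq_norm _ _).trans_lt
      (((hdiff m n).norm_le_midNorm hp hq0 j).trans_lt (hN m hm n hn))⟩
  choose v hv using fun j => cauchySeq_tendsto_of_complete (hcs j)
  have hlim : ∀ m j, Tendsto (fun n => (u m - u n) j) atTop (𝓝 ((u m - v) j)) :=
    fun m j => (hv j).const_sub (u m j)
  have hclose : ∀ ε > 0, ∃ N, ∀ m ≥ N, ∀ᶠ n in atTop, midNorm 𝕜 q p (u m - u n) ≤ ε :=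
    fun ε hε => (hcauchy ε hε).imp fun N hN m hm =>
      eventually_atTop.2 ⟨N, fun n hn => (hN m hm n hn).le⟩
  obtain ⟨N, hN⟩ := hclose 1 one_pos
  have hvN : MidSummable 𝕜 q p (u N - v) :=
    MidSummable.of_tendsto hp hq0 (hdiff N) (hlim N) zero_le_one (hN N le_rfl)
  refine ⟨v, by simpa using (hmid N).sub hp0 hq0.le hvN, Metric.tendsto_atTop.2 fun ε hε => ?_⟩
  obtain ⟨M, hM⟩ := hclose (ε / 2) (half_pos hε)
  refine ⟨M, fun m hm => ?_⟩
  rw [Real.dist_eq, sub_zero, abs_of_nonneg (midNorm_nonneg _)]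
  exact (midNorm_le_of_tendsto hp hq0 (hdiff m) (hlim m) (half_pos hε).le (hM m hm)).trans_lt
    (half_lt_self hε)
end
end

section
/- Let E and F be Banach spaces, 1 ≤ p < ∞ and 1 ≤ r < q < ∞. If T : E → F is a bounded linear operator such that (T(x_j))_{j=1}^∞ is absolutely r-summable in F for every mid (q,p)-summable sequence (x_j)_{j=1}^∞ in E, then T = 0. -/
/-!
Fix `x` with `T x ≠ 0` and put `x_j = j ^ (-1/r) • x`. For a scalar multiple of a fixed vector the
mid `(q,p)`-sum factors as `(∑_j |c_j|^q) · (∑_n |x_n^*(x)|^p)^{q/p}`, so `(x_j)` is mid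
`(q,p)`-summable because `∑_j j^(-q/r) < ∞` for `q > r`. But `∑_j ‖T x_j‖^r = ‖T x‖^r ∑_j j⁻¹`
diverges.
-/

open NormedSpace MeasureTheory

noncomputable section

variable {𝕜 E F : Type*}

theorem summable_natCast_rpow_rpow_iff {r : ℝ} (hr : 0 < r) (s : ℝ) :
    Summable (fun n : ℕ => ((n : ℝ) ^ (-r⁻¹)) ^ s) ↔ r < s := by
  simp_rw [← Real.rpow_mul (Nat.cast_nonneg _)]
  rw [Real.summable_nat_rpow, neg_mul, neg_lt_neg_iff, ← div_eq_inv_mul, one_lt_div hr]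

section Summability

variable [RCLike 𝕜] [NormedAddCommGroup E] [NormedSpace 𝕜 E]
  [NormedAddCommGroup F] [NormedSpace 𝕜 F]

theorem midSummable_smul_const {p q : ℝ} (hp : p ≠ 0) {c : ℕ → 𝕜}
    (hc : Summable fun j => ‖c j‖ ^ q) (x : E) : MidSummable 𝕜 q p fun j => c j • x := by
  intro xs _
  have hfactor : ∀ j, (∑' n, ‖xs n (c j • x)‖ ^ p) ^ (q / p)
      = ‖c j‖ ^ q * (∑' n, ‖xs n x‖ ^ p) ^ (q / p) := by
    intro j
    simp only [map_smul, norm_smul, Real.mul_rpow (norm_nonneg _) (norm_nonneg _), tsum_mul_left]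
    rw [Real.mul_rpow (by positivity) (tsum_nonneg fun _ => by positivity),
      ← Real.rpow_mul (norm_nonneg _), mul_div_cancel₀ q hp]
  simpa only [hfactor] using hc.mul_right _

theorem summable_norm_smul_rpow_iff {r : ℝ} {c : ℕ → 𝕜} {y : F} (hy : y ≠ 0) :
    Summable (fun j => ‖c j • y‖ ^ r) ↔ Summable fun j => ‖c j‖ ^ r := by
  simp only [norm_smul, Real.mul_rpow (norm_nonneg _) (norm_nonneg _)]
  exact summable_mul_right_iff (Real.rpow_pos_of_pos (norm_pos_iff.2 hy) r).ne'

end Summability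

theorem stmt12_general [RCLike 𝕜] [NormedAddCommGroup E] [NormedSpace 𝕜 E]
    [NormedAddCommGroup F] [NormedSpace 𝕜 F]
    (p q r : ℝ) (hp : 1 ≤ p) (hr : 1 ≤ r) (hrq : r < q) (T : E →L[𝕜] F)
    (h : ∀ x : ℕ → E, MidSummable 𝕜 q p x → Summable fun j => ‖T (x j)‖ ^ r) :
    T = 0 := by
  by_contra hT
  obtain ⟨x, hx⟩ : ∃ x, T x ≠ 0 := by
    simpa [ContinuousLinearMap.ext_iff] using hT
  have hr0 : 0 < r := by linarith
  set c : ℕ → 𝕜 := fun n => (((n : ℝ) ^ (-r⁻¹) : ℝ) : 𝕜)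
  have hc : ∀ s, Summable (fun n => ‖c n‖ ^ s) ↔ r < s := fun s => by
    simpa [c, RCLike.norm_ofReal, abs_of_nonneg (Real.rpow_nonneg (Nat.cast_nonneg _) _)]
      using summable_natCast_rpow_rpow_iff hr0 s
  have hTc := h _ (midSummable_smul_const (by positivity) ((hc q).2 hrq) x)
  simp only [map_smul] at hTc
  exact lt_irrefl r ((hc r).1 ((summable_norm_smul_rpow_iff hx).1 hTc))

/-- if `r < q` and `T` sends every mid `(q,p)`-summable sequence to an absolutely
`r`-summable sequence, then `T = 0`. -/
theorem stmt12 [RCLike 𝕜] [NormedAddCommGroup E] [NormedSpace 𝕜 E] [CompleteSpace E]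
    [NormedAddCommGroup F] [NormedSpace 𝕜 F] [CompleteSpace F]
    (p q r : ℝ) (hp : 1 ≤ p) (hr : 1 ≤ r) (hrq : r < q) (T : E →L[𝕜] F)
    (h : ∀ x : ℕ → E, MidSummable 𝕜 q p x → Summable fun j => ‖T (x j)‖ ^ r) :
    T = 0 :=
  stmt12_general p q r hp hr hrq T h
end
end

section
/- Let E and F be Banach spaces, 1 ≤ p < ∞ and 1 ≤ q < r < ∞. If T : E → F is a bounded linear operator such that (T(x_j))_{j=1}^∞ is mid (q,p)-summable in F for every weakly r-summable sequence (x_j)_{j=1}^∞ in E, then T = 0. -/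
/-!
Testing a mid `(q,p)`-summable sequence against the weakly `p`-summable sequence `(ψ, 0, 0, …)`
shows that it is weakly `q`-summable. So `T` would map weakly `r`-summable sequences to weakly
`q`-summable ones. On `x_j = (j+1)^(-1/q) x` this fails as soon as `ψ (T x) ≠ 0` for some
functional `ψ`: `∑ (j+1)^(-r/q)` converges, while `∑ |ψ(T x_j)|^q = |ψ(T x)|^q ∑ (j+1)^(-1)`
is a multiple of the harmonic series.
-/

open NormedSpace MeasureTheory

noncomputable section

variable {𝕜 E F : Type*}

section

variable [RCLike 𝕜] [NormedAddCommGroup E] [NormedSpace 𝕜 E]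
  [NormedAddCommGroup F] [NormedSpace 𝕜 F]

theorem summable_norm_natCast_add_one_rpow_neg_inv_rpow_iff {q : ℝ} (hq : 0 < q) (s : ℝ) :
    (Summable fun j : ℕ => ‖(((j + 1 : ℝ) ^ (-q⁻¹) : ℝ) : 𝕜)‖ ^ s) ↔ q < s := by
  have hnorm : ∀ j : ℕ,
      ‖(((j + 1 : ℝ) ^ (-q⁻¹) : ℝ) : 𝕜)‖ ^ s = ((j + 1 : ℕ) : ℝ) ^ (-(s / q)) := by
    intro j
    rw [RCLike.norm_ofReal, abs_of_nonneg (by positivity), ← Real.rpow_mul (by positivity)]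
    push_cast
    ring_nf
  simp only [hnorm]
  rw [summable_nat_add_iff 1 (f := fun n : ℕ => (n : ℝ) ^ (-(s / q))), Real.summable_nat_rpow,
    neg_lt_neg_iff, one_lt_div hq]

theorem weaklySummable_smul_const {r : ℝ} {c : ℕ → 𝕜} (hc : Summable fun j => ‖c j‖ ^ r)
    (x : E) : WeaklySummable 𝕜 r fun j => c j • x := by
  intro φ
  simp only [map_smul, norm_smul, Real.mul_rpow (norm_nonneg _) (norm_nonneg _)]
  exact hc.mul_right _

theorem eq_zero_of_weaklySummable_smul_const {q : ℝ} {c : ℕ → 𝕜}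
    (hc : ¬Summable fun j => ‖c j‖ ^ q) {x : E} (hx : WeaklySummable 𝕜 q fun j => c j • x) :
    x = 0 := by
  refine SeparatingDual.eq_zero_of_forall_dual_eq_zero (R := 𝕜) fun φ => ?_
  have hφ := hx φ
  simp only [map_smul, norm_smul, Real.mul_rpow (norm_nonneg _) (norm_nonneg _)] at hφ
  have hzero : ‖φ x‖ ^ q = 0 := by
    by_contra hne
    exact hc ((summable_mul_right_iff hne).mp hφ)
  exact norm_eq_zero.mp ((Real.rpow_eq_zero_iff_of_nonneg (norm_nonneg _)).mp hzero).1

theorem weaklySummable_pi_single {p : ℝ} (hp : p ≠ 0) (i : ℕ) (ψ : StrongDual 𝕜 F) :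
    WeaklySummable 𝕜 p (Pi.single i ψ) := by
  intro Φ
  refine summable_of_ne_finset_zero (s := {i}) fun n hn => ?_
  rw [Finset.mem_singleton] at hn
  simp [hn, Real.zero_rpow hp]

theorem MidSummable.weaklySummable {p q : ℝ} {y : ℕ → F} (hy : MidSummable 𝕜 q p y)
    (hp : p ≠ 0) : WeaklySummable 𝕜 q y := by
  intro ψ
  convert hy _ (weaklySummable_pi_single hp 0 ψ) using 2 with j
  rw [tsum_eq_single 0 fun n hn => by simp [hn, Real.zero_rpow hp], Pi.single_eq_same,
    ← Real.rpow_mul (norm_nonneg _), mul_div_cancel₀ q hp]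

theorem ContinuousLinearMap.eq_zero_of_forall_weaklySummable_comp {q r : ℝ} (hq : 0 < q)
    (hqr : q < r) (T : E →L[𝕜] F)
    (hT : ∀ x : ℕ → E, WeaklySummable 𝕜 r x → WeaklySummable 𝕜 q fun j => T (x j)) :
    T = 0 := by
  ext x
  set c : ℕ → 𝕜 := fun j => (((j + 1 : ℝ) ^ (-q⁻¹) : ℝ) : 𝕜)
  have hcr : Summable fun j => ‖c j‖ ^ r :=
    (summable_norm_natCast_add_one_rpow_neg_inv_rpow_iff hq r).mpr hqr
  have hcq : ¬Summable fun j => ‖c j‖ ^ q :=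
    mt (summable_norm_natCast_add_one_rpow_neg_inv_rpow_iff hq q).mp (lt_irrefl q)
  refine eq_zero_of_weaklySummable_smul_const hcq ?_
  simpa only [map_smul] using hT _ (weaklySummable_smul_const hcr x)

end

theorem stmt13_general [RCLike 𝕜] [NormedAddCommGroup E] [NormedSpace 𝕜 E]
    [NormedAddCommGroup F] [NormedSpace 𝕜 F]
    (p q r : ℝ) (hp : 1 ≤ p) (hq : 1 ≤ q) (hqr : q < r) (T : E →L[𝕜] F)
    (h : ∀ x : ℕ → E, WeaklySummable 𝕜 r x → MidSummable 𝕜 q p fun j => T (x j)) :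
    T = 0 :=
  T.eq_zero_of_forall_weaklySummable_comp (by linarith) hqr fun x hx =>
    (h x hx).weaklySummable (by linarith)

/-- if `q < r` and `T` sends every weakly `r`-summable sequence to a mid
`(q,p)`-summable sequence, then `T = 0`. -/
theorem stmt13 [RCLike 𝕜] [NormedAddCommGroup E] [NormedSpace 𝕜 E] [CompleteSpace E]
    [NormedAddCommGroup F] [NormedSpace 𝕜 F] [CompleteSpace F]
    (p q r : ℝ) (hp : 1 ≤ p) (hq : 1 ≤ q) (hqr : q < r) (T : E →L[𝕜] F)
    (h : ∀ x : ℕ → E, WeaklySummable 𝕜 r x → MidSummable 𝕜 q p fun j => T (x j)) :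
    T = 0 :=
  stmt13_general p q r hp hq hqr T h
end
end

section
/- Let E and F be Banach spaces, 1 ≤ p < ∞ and 1 ≤ r ≤ q < ∞, and T : E → F a bounded linear operator. Then (T(x_j))_{j=1}^∞ is mid (q,p)-summable in F for every weakly r-summable sequence (x_j)_{j=1}^∞ in E if and only if there is a constant B > 0 such that (∑_{j=1}^k (∑_{n=1}^∞ |y_n*(T(x_j))|^p)^{q/p})^{1/q} ≤ B · sup_{φ ∈ B_{E*}} (∑_{j=1}^k |φ(x_j)|^r)^{1/r} · ‖(y_n*)_{n=1}^∞‖_{w,p} for every k ∈ ℕ, all x_1,…,x_k ∈ E and every weakly p-summable sequence (y_n*)_{n=1}^∞ in F*. -/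
open NormedSpace MeasureTheory

noncomputable section

/-!
If the bound holds, a weakly `r`-summable sequence has mid sums over its initial segments bounded
by `B ‖x‖_{w,r} ‖y^*‖_{w,p}`: its initial segments have weak norm at most that of the whole
sequence, which is finite by Banach–Steinhaus.

Conversely, if no `B` works, the inequality fails for `B = 4^m`; since both sides are homogeneous
in `x` and in `y^*`, the failing data can be rescaled to a finite family `z_m` and a weakly
`p`-summable `w_m`, both of weak norm at most `2^{-m}`, whose mid sum is at least `1`.
Concatenating the `z_m`, and separately the `w_m`, gives a weakly `r`-summable sequence and a weakly
`p`-summable one, because `∑ₘ (2^{-m})^s < ∞`. Their mid sum dominates each block, so it diverges.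
-/

theorem tsum_mul_rpow_rpow_div {ι : Type*} {p : ℝ} (hp : p ≠ 0) (s : ℝ) {t : ℝ} (ht : 0 ≤ t)
    {g : ι → ℝ} (hg : 0 ≤ g) :
    (∑' j, (t * g j) ^ p) ^ (s / p) = t ^ s * (∑' j, g j ^ p) ^ (s / p) := by
  simp only [Real.mul_rpow ht (hg _), tsum_mul_left]
  rw [Real.mul_rpow (Real.rpow_nonneg ht _) (tsum_nonneg fun j => Real.rpow_nonneg (hg j) _),
    ← Real.rpow_mul ht, mul_div_cancel₀ s hp]

theorem summable_pow_rpow_of_lt_one {x : ℝ} (h0 : 0 ≤ x) (h1 : x < 1) {s : ℝ} (hs : 0 < s) :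
    Summable fun m : ℕ => (x ^ m) ^ s := by
  simp only [← Real.rpow_pow_comm h0]
  exact summable_geometric_of_lt_one (by positivity) (Real.rpow_lt_one h0 h1 hs)

section WeakNorm

variable {𝕜 V ι : Type*} [RCLike 𝕜] [NormedAddCommGroup V] [NormedSpace 𝕜 V]

variable (𝕜) in
def weakLpNorm (p : ℝ) (x : ι → V) : ℝ :=
  ⨆ φ : {φ : StrongDual 𝕜 V // ‖φ‖ ≤ 1}, (∑' j, ‖φ.1 (x j)‖ ^ p) ^ (1 / p)

theorem weakNorm_eq_weakLpNorm (p : ℝ) (x : ℕ → V) : weakNorm 𝕜 p x = weakLpNorm 𝕜 p x := rfl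

theorem weakLpNorm_fintype [Fintype ι] (p : ℝ) (x : ι → V) :
    weakLpNorm 𝕜 p x = ⨆ φ : {φ : StrongDual 𝕜 V // ‖φ‖ ≤ 1}, (∑ j, ‖φ.1 (x j)‖ ^ p) ^ (1 / p) := by
  simp only [weakLpNorm, tsum_fintype]

theorem weakLpNorm_nonneg (p : ℝ) (x : ι → V) : 0 ≤ weakLpNorm 𝕜 p x :=
  Real.iSup_nonneg fun _ => by positivity

theorem weakLpNorm_smul {p : ℝ} (hp : p ≠ 0) (a : 𝕜) (x : ι → V) :
    weakLpNorm 𝕜 p (fun j => a • x j) = ‖a‖ * weakLpNorm 𝕜 p x := by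
  simp only [weakLpNorm, Real.mul_iSup_of_nonneg (norm_nonneg a), map_smul, norm_smul]
  refine iSup_congr fun φ => ?_
  rw [tsum_mul_rpow_rpow_div hp 1 (norm_nonneg a) fun _ => norm_nonneg _, Real.rpow_one]

theorem WeaklySummable.smul_s15 {p : ℝ} {x : ℕ → V} (hx : WeaklySummable 𝕜 p x) (a : 𝕜) :
    WeaklySummable 𝕜 p fun j => a • x j := fun φ => by
  simpa only [map_smul, norm_smul, Real.mul_rpow (norm_nonneg a) (norm_nonneg _)]
    using (hx φ).mul_left (‖a‖ ^ p)

/-- Banach–Steinhaus, applied to the truncations `φ ↦ ∑_{j ∈ s} φ (x j) e_j` into `ℓ^p`. -/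
theorem bddAbove_range_tsum_rpow {p : ℝ} (hp : 1 ≤ p) {x : ι → V}
    (hx : ∀ φ : StrongDual 𝕜 V, Summable fun j => ‖φ (x j)‖ ^ p) :
    BddAbove (Set.range fun φ : {φ : StrongDual 𝕜 V // ‖φ‖ ≤ 1} =>
      (∑' j, ‖φ.1 (x j)‖ ^ p) ^ (1 / p)) := by
  classical
  have hp0 : 0 < p := one_pos.trans_le hp
  set P := ENNReal.ofReal p
  have : Fact (1 ≤ P) := ⟨ENNReal.one_le_ofReal.2 hp⟩
  have hP : P.toReal = p := ENNReal.toReal_ofReal hp0.le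
  let g : Finset ι → StrongDual 𝕜 V →L[𝕜] lp (fun _ : ι => 𝕜) P := fun s =>
    ∑ j ∈ s, (lp.singleContinuousLinearMap 𝕜 (fun _ : ι => 𝕜) P j).comp
      (ContinuousLinearMap.apply 𝕜 𝕜 (x j))
  have hg : ∀ s φ, ‖g s φ‖ = (∑ j ∈ s, ‖φ (x j)‖ ^ p) ^ p⁻¹ := fun s φ => by
    have h := lp.norm_sum_single (p := P) (hP ▸ hp0) (fun j => φ (x j)) s
    rw [hP] at h
    simp only [g, sum_apply, ContinuousLinearMap.comp_apply,
      ContinuousLinearMap.apply_apply, lp.singleContinuousLinearMap_apply] at h ⊢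
    rw [← h, Real.rpow_rpow_inv (norm_nonneg _) hp0.ne']
  have hsum_nonneg : ∀ (s : Finset ι) (φ : StrongDual 𝕜 V), 0 ≤ ∑ j ∈ s, ‖φ (x j)‖ ^ p :=
    fun s φ => Finset.sum_nonneg fun j _ => by positivity
  obtain ⟨C, hC⟩ := banach_steinhaus fun φ : StrongDual 𝕜 V =>
    ⟨(∑' j, ‖φ (x j)‖ ^ p) ^ p⁻¹, fun s => by
      rw [hg]
      exact Real.rpow_le_rpow (hsum_nonneg s φ)
        ((hx φ).sum_le_tsum s fun j _ => by positivity) (by positivity)⟩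
  have hC0 : 0 ≤ C := (norm_nonneg _).trans (hC ∅)
  refine ⟨C, Set.forall_mem_range.2 fun φ => ?_⟩
  rw [one_div, Real.rpow_inv_le_iff_of_pos (tsum_nonneg fun j => by positivity) hC0 hp0]
  refine Real.tsum_le_of_sum_le (fun j => by positivity) fun s => ?_
  rw [← Real.rpow_inv_le_iff_of_pos (hsum_nonneg s φ) hC0 hp0, ← hg]
  calc ‖g s φ‖ ≤ ‖g s‖ * ‖φ.1‖ := (g s).le_opNorm φ
    _ ≤ C * 1 := mul_le_mul (hC s) φ.2 (norm_nonneg _) hC0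
    _ = C := mul_one C

theorem le_iSup_unitBall_mul_norm_of_homogeneous {X : Type*} [NormedAddCommGroup X]
    [NormedSpace 𝕜 X] {f : X → ℝ} (hf : ∀ (c : 𝕜) v, f (c • v) = ‖c‖ * f v)
    (hbdd : BddAbove (Set.range fun u : {u : X // ‖u‖ ≤ 1} => f u)) (v : X) :
    f v ≤ (⨆ u : {u : X // ‖u‖ ≤ 1}, f u) * ‖v‖ := by
  rcases eq_or_ne v 0 with rfl | hv
  · simpa using (hf 0 0).le
  set u : X := (‖v‖⁻¹ : 𝕜) • v
  have hu : ‖u‖ ≤ 1 := (norm_smul_inv_norm hv).le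
  have hvu : v = (‖v‖ : 𝕜) • u := by
    rw [smul_smul, mul_inv_cancel₀ (by exact_mod_cast norm_ne_zero_iff.2 hv), one_smul]
  calc f v = ‖v‖ * f u := by conv_lhs => rw [hvu, hf, RCLike.norm_ofReal, abs_norm]
    _ ≤ ‖v‖ * ⨆ u : {u : X // ‖u‖ ≤ 1}, f u :=
      mul_le_mul_of_nonneg_left (le_ciSup hbdd ⟨u, hu⟩) (norm_nonneg v)
    _ = _ := mul_comm _ _

theorem tsum_rpow_le_weakLpNorm_mul_norm {p : ℝ} (hp : 1 ≤ p) {x : ι → V}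
    (hx : ∀ φ : StrongDual 𝕜 V, Summable fun j => ‖φ (x j)‖ ^ p) (φ : StrongDual 𝕜 V) :
    (∑' j, ‖φ (x j)‖ ^ p) ^ (1 / p) ≤ weakLpNorm 𝕜 p x * ‖φ‖ := by
  refine le_iSup_unitBall_mul_norm_of_homogeneous (𝕜 := 𝕜)
    (f := fun ψ : StrongDual 𝕜 V => (∑' j, ‖ψ (x j)‖ ^ p) ^ (1 / p)) (fun c ψ => ?_)
    (bddAbove_range_tsum_rpow hp hx) φ
  simp only [smul_apply, smul_eq_mul, norm_mul]
  rw [tsum_mul_rpow_rpow_div (by positivity) 1 (norm_nonneg c) fun _ => norm_nonneg _,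
    Real.rpow_one]

theorem norm_apply_le_weakLpNorm_mul_norm {p : ℝ} (hp : 1 ≤ p) {x : ι → V}
    (hx : ∀ φ : StrongDual 𝕜 V, Summable fun j => ‖φ (x j)‖ ^ p) (φ : StrongDual 𝕜 V) (j : ι) :
    ‖φ (x j)‖ ≤ weakLpNorm 𝕜 p x * ‖φ‖ := by
  have hp0 : 0 < p := one_pos.trans_le hp
  refine le_trans ?_ (tsum_rpow_le_weakLpNorm_mul_norm hp hx φ)
  calc ‖φ (x j)‖ = (‖φ (x j)‖ ^ p) ^ (1 / p) := by
        rw [one_div, Real.rpow_rpow_inv (norm_nonneg _) hp0.ne']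
    _ ≤ _ := Real.rpow_le_rpow (by positivity)
        ((hx φ).le_tsum j fun _ _ => by positivity) (by positivity)

theorem weakLpNorm_comp_le {κ : Type*} {p : ℝ} (hp : 1 ≤ p) {x : ι → V}
    (hx : ∀ φ : StrongDual 𝕜 V, Summable fun j => ‖φ (x j)‖ ^ p) {e : κ → ι}
    (he : Function.Injective e) : weakLpNorm 𝕜 p (x ∘ e) ≤ weakLpNorm 𝕜 p x := by
  have : Nonempty {φ : StrongDual 𝕜 V // ‖φ‖ ≤ 1} := ⟨⟨0, by simp⟩⟩
  refine ciSup_le fun φ => le_trans ?_ (le_ciSup (bddAbove_range_tsum_rpow hp hx) φ)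
  exact Real.rpow_le_rpow (tsum_nonneg fun _ => by positivity)
    (tsum_comp_le_tsum_of_inj (hx φ) (fun _ => by positivity) he) (by positivity)

theorem weaklySummable_extend_encode_sigma {κ : ℕ → Type*} [∀ m, Encodable (κ m)] {p : ℝ}
    (hp : 1 ≤ p) (u : (m : ℕ) → κ m → V)
    (hu : ∀ m (φ : StrongDual 𝕜 V), Summable fun j => ‖φ (u m j)‖ ^ p) {c : ℕ → ℝ}
    (hc : ∀ m, weakLpNorm 𝕜 p (u m) ≤ c m) (hcs : Summable fun m => c m ^ p) :
    WeaklySummable 𝕜 p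
      (Function.extend Encodable.encode (fun σ : (m : ℕ) × κ m => u σ.1 σ.2) 0) := by
  intro φ
  have hp0 : 0 < p := one_pos.trans_le hp
  have henc : Function.Injective (Encodable.encode : (m : ℕ) × κ m → ℕ) :=
    Encodable.encode_injective
  rw [← henc.summable_iff fun n hn => by
    simp [Function.extend_apply' _ _ _ hn, Real.zero_rpow hp0.ne']]
  simp only [Function.comp_def, henc.extend_apply]
  refine (summable_sigma_of_nonneg fun _ => by positivity).2 ⟨fun m => hu m φ, ?_⟩
  refine (hcs.mul_right (‖φ‖ ^ p)).of_nonneg_of_le (fun _ => tsum_nonneg fun _ => by positivity)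
    fun m => ?_
  have hcm : 0 ≤ c m := (weakLpNorm_nonneg p (u m)).trans (hc m)
  rw [← Real.mul_rpow hcm (norm_nonneg _), ← Real.rpow_inv_le_iff_of_pos
    (tsum_nonneg fun _ => by positivity) (by positivity) hp0, ← one_div]
  exact (tsum_rpow_le_weakLpNorm_mul_norm hp (hu m) φ).trans
    (mul_le_mul_of_nonneg_right (hc m) (norm_nonneg _))

theorem not_midSummable_extend_encode_sigma {κ : ℕ → Type*} [∀ m, Fintype (κ m)]
    [∀ m, Encodable (κ m)] {p q : ℝ} (hp : 1 ≤ p) (hq : 0 < q) (y : (m : ℕ) → κ m → V)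
    (w : ℕ → ℕ → StrongDual 𝕜 V) (hw : ∀ m, WeaklySummable 𝕜 p (w m)) {c : ℕ → ℝ}
    (hc : ∀ m, weakNorm 𝕜 p (w m) ≤ c m) (hcs : Summable fun m => c m ^ p)
    (hblock : ∀ m, 1 ≤ ∑ j, (∑' n, ‖w m n (y m j)‖ ^ p) ^ (q / p)) :
    ¬ MidSummable 𝕜 q p
      (Function.extend Encodable.encode (fun σ : (m : ℕ) × κ m => y σ.1 σ.2) 0) := by
  intro hmid
  have hp0 : 0 < p := one_pos.trans_le hp
  set ys := Function.extend Encodable.encode (fun τ : (_ : ℕ) × ℕ => w τ.1 τ.2) 0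
  have hys : WeaklySummable 𝕜 p ys := weaklySummable_extend_encode_sigma hp w hw hc hcs
  have hys_apply : ∀ v : V, Summable fun n => ‖ys n v‖ ^ p := fun v => by
    simpa only [dual_def] using hys (inclusionInDoubleDual 𝕜 V v)
  have hmid_ys := hmid ys hys
  have henc : Function.Injective (Encodable.encode : (m : ℕ) × κ m → ℕ) :=
    Encodable.encode_injective
  rw [← henc.summable_iff fun n hn => by
    simp [Function.extend_apply' _ _ _ hn, Real.zero_rpow hp0.ne',
      Real.zero_rpow (div_pos hq hp0).ne']]
    at hmid_ys
  simp only [Function.comp_def, henc.extend_apply] at hmid_ys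
  have hrows := ((summable_sigma_of_nonneg fun _ => by positivity).1 hmid_ys).2
  have hrow_ge : ∀ m, 1 ≤ ∑' j, (∑' n, ‖ys n (y m j)‖ ^ p) ^ (q / p) := fun m => by
    rw [tsum_fintype]
    refine (hblock m).trans (Finset.sum_le_sum fun j _ => ?_)
    refine Real.rpow_le_rpow (tsum_nonneg fun _ => by positivity) ?_ (by positivity)
    have hencw : Function.Injective (Encodable.encode : (_ : ℕ) × ℕ → ℕ) :=
      Encodable.encode_injective
    have h := tsum_comp_le_tsum_of_inj (hys_apply (y m j)) (fun _ => by positivity)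
      (hencw.comp (sigma_mk_injective (i := m)))
    simpa only [Function.comp_def, ys, hencw.extend_apply] using h
  exact one_ne_zero <| (summable_const_iff (1 : ℝ)).1 <|
    hrows.of_nonneg_of_le (fun _ => zero_le_one) hrow_ge

end WeakNorm

section Operator

variable {𝕜 E F ι : Type*} [RCLike 𝕜] [NormedAddCommGroup E] [NormedSpace 𝕜 E]
  [NormedAddCommGroup F] [NormedSpace 𝕜 F] {p q r : ℝ}

theorem mid_sum_smul [Fintype ι] (hp : p ≠ 0) (hq : q ≠ 0) (a b : 𝕜) (y : ι → F)
    (w : ℕ → StrongDual 𝕜 F) :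
    (∑ j, (∑' n, ‖(b • w n) (a • y j)‖ ^ p) ^ (q / p)) ^ (1 / q) =
      ‖a‖ * ‖b‖ * (∑ j, (∑' n, ‖w n (y j)‖ ^ p) ^ (q / p)) ^ (1 / q) := by
  have hab : 0 ≤ ‖a‖ * ‖b‖ := by positivity
  have hentry : ∀ j n, ‖(b • w n) (a • y j)‖ = ‖a‖ * ‖b‖ * ‖w n (y j)‖ := fun j n => by
    simp only [smul_apply, map_smul, smul_eq_mul, norm_mul]
    ring
  simp only [hentry, tsum_mul_rpow_rpow_div hp q hab fun _ => norm_nonneg _, ← Finset.mul_sum]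
  rw [Real.mul_rpow (by positivity) (Finset.sum_nonneg fun _ _ => by positivity),
    ← Real.rpow_mul hab, mul_one_div_cancel hq, Real.rpow_one]

theorem weakNorms_pos_of_mid_sum_pos [Fintype ι] (hp : 1 ≤ p) (hr : 1 ≤ r) (hq : q ≠ 0)
    (T : E →L[𝕜] F) (z : ι → E) {w : ℕ → StrongDual 𝕜 F} (hw : WeaklySummable 𝕜 p w)
    (hpos : 0 < ∑ j, (∑' n, ‖w n (T (z j))‖ ^ p) ^ (q / p)) :
    0 < weakLpNorm 𝕜 r z ∧ 0 < weakNorm 𝕜 p w := by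
  have hp0 : 0 < p := one_pos.trans_le hp
  have hentries : ¬ ∀ j n, w n (T (z j)) = 0 := fun h => hpos.ne' <| by
    simp [h, Real.zero_rpow hp0.ne', Real.zero_rpow (div_ne_zero hq hp0.ne')]
  refine ⟨(weakLpNorm_nonneg r z).lt_of_ne fun hW => hentries fun j n => ?_,
    (weakLpNorm_nonneg p w).lt_of_ne fun hN => hentries fun j n => ?_⟩
  · simpa [← hW] using
      norm_apply_le_weakLpNorm_mul_norm (x := z) hr (fun _ => .of_finite) ((w n).comp T) j
  · simpa [weakNorm_eq_weakLpNorm, ← hN, dual_def] using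
      norm_apply_le_weakLpNorm_mul_norm hp hw (inclusionInDoubleDual 𝕜 F (T (z j))) n

theorem exists_normalized_block [Fintype ι] (hp : 1 ≤ p) (hr : 1 ≤ r) (hq : 0 < q)
    (T : E →L[𝕜] F) {ε : ℝ} (hε : 0 < ε) (z : ι → E) {w : ℕ → StrongDual 𝕜 F}
    (hw : WeaklySummable 𝕜 p w)
    (hlt : (ε ^ 2)⁻¹ * weakLpNorm 𝕜 r z * weakNorm 𝕜 p w <
      (∑ j, (∑' n, ‖w n (T (z j))‖ ^ p) ^ (q / p)) ^ (1 / q)) :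
    ∃ (z' : ι → E) (w' : ℕ → StrongDual 𝕜 F), WeaklySummable 𝕜 p w' ∧
      weakLpNorm 𝕜 r z' ≤ ε ∧ weakNorm 𝕜 p w' ≤ ε ∧
      1 ≤ ∑ j, (∑' n, ‖w' n (T (z' j))‖ ^ p) ^ (q / p) := by
  have hp0 : p ≠ 0 := (one_pos.trans_le hp).ne'
  have hr0 : r ≠ 0 := (one_pos.trans_le hr).ne'
  set W := weakLpNorm 𝕜 r z
  set N := weakNorm 𝕜 p w
  set S := ∑ j, (∑' n, ‖w n (T (z j))‖ ^ p) ^ (q / p) with hS_def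
  have hS : 0 < S := by
    refine (Finset.sum_nonneg fun _ _ => by positivity).lt_of_ne fun h => hlt.not_ge ?_
    rw [hS_def, ← h, Real.zero_rpow (one_div_ne_zero hq.ne')]
    exact mul_nonneg (mul_nonneg (by positivity) (weakLpNorm_nonneg r z))
      (weakLpNorm_nonneg p w)
  obtain ⟨hW, hN⟩ : 0 < W ∧ 0 < N := weakNorms_pos_of_mid_sum_pos hp hr hq.ne' T z hw hS
  set a : 𝕜 := ((ε / W : ℝ) : 𝕜)
  set b : 𝕜 := ((ε / N : ℝ) : 𝕜)
  have ha : ‖a‖ = ε / W := by rw [RCLike.norm_ofReal, abs_of_pos (div_pos hε hW)]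
  have hb : ‖b‖ = ε / N := by rw [RCLike.norm_ofReal, abs_of_pos (div_pos hε hN)]
  refine ⟨fun j => a • z j, fun n => b • w n, hw.smul_s15 b, ?_, ?_, ?_⟩
  · rw [weakLpNorm_smul hr0 a z, ha]
    exact (div_mul_cancel₀ ε hW.ne').le
  · rw [weakNorm_eq_weakLpNorm, weakLpNorm_smul hp0 b w, hb]
    exact (div_mul_cancel₀ ε hN.ne').le
  · have hL : (∑ j, (∑' n, ‖(b • w n) (T (a • z j))‖ ^ p) ^ (q / p)) ^ (1 / q) =
        ‖a‖ * ‖b‖ * S ^ (1 / q) := by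
      have hT : ∀ j, T (a • z j) = a • T (z j) := fun j => map_smul T a (z j)
      simp only [hT]
      exact mid_sum_smul hp0 hq.ne' a b _ w
    have hL_gt : 1 < ‖a‖ * ‖b‖ * S ^ (1 / q) := by
      rw [ha, hb]
      calc 1 = ε / W * (ε / N) * ((ε ^ 2)⁻¹ * W * N) := by field_simp [hW.ne', hN.ne']
        _ < ε / W * (ε / N) * S ^ (1 / q) := mul_lt_mul_of_pos_left hlt (by positivity)
    by_contra! h
    rw [← hL] at hL_gt
    exact hL_gt.not_ge (Real.rpow_le_one (Finset.sum_nonneg fun _ _ => by positivity) h.le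
      (by positivity))

theorem exists_bound_of_forall_midSummable (hp : 1 ≤ p) (hr : 1 ≤ r) (hq : 0 < q)
    (T : E →L[𝕜] F) (h : ∀ x : ℕ → E, WeaklySummable 𝕜 r x → MidSummable 𝕜 q p fun j => T (x j)) :
    ∃ B > 0, ∀ (k : ℕ) (x : Fin k → E) (ys : ℕ → StrongDual 𝕜 F), WeaklySummable 𝕜 p ys →
      (∑ j, (∑' n, ‖ys n (T (x j))‖ ^ p) ^ (q / p)) ^ (1 / q) ≤
        B * (⨆ φ : {φ : StrongDual 𝕜 E // ‖φ‖ ≤ 1}, (∑ j, ‖φ.1 (x j)‖ ^ r) ^ (1 / r)) *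
          weakNorm 𝕜 p ys := by
  by_contra hcon
  push Not at hcon
  have hblock : ∀ m : ℕ, ∃ (k : ℕ) (z : Fin k → E) (w : ℕ → StrongDual 𝕜 F),
      WeaklySummable 𝕜 p w ∧ weakLpNorm 𝕜 r z ≤ (1 / 2) ^ m ∧ weakNorm 𝕜 p w ≤ (1 / 2) ^ m ∧
      1 ≤ ∑ j, (∑' n, ‖w n (T (z j))‖ ^ p) ^ (q / p) := fun m => by
    obtain ⟨k, z, w, hw, hlt⟩ := hcon (((1 / 2) ^ m) ^ 2)⁻¹ (by positivity)
    rw [← weakLpNorm_fintype] at hlt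
    exact ⟨k, exists_normalized_block hp hr hq T (by positivity) z hw hlt⟩
  choose k z w hw hz hwn hone using hblock
  have hx := weaklySummable_extend_encode_sigma hr z (fun _ _ => .of_finite) hz
    (summable_pow_rpow_of_lt_one (by norm_num) (by norm_num) (by linarith))
  refine not_midSummable_extend_encode_sigma hp hq (fun m j => T (z m j)) w hw hwn
    (summable_pow_rpow_of_lt_one (by norm_num) (by norm_num) (by linarith)) hone ?_
  convert h _ hx using 2 with n
  rw [Function.apply_extend T]
  congr
  exact funext fun _ => (map_zero T).symm

theorem forall_midSummable_of_bound (hr : 1 ≤ r) (hq : 0 < q) (T : E →L[𝕜] F) {B : ℝ}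
    (hB : 0 ≤ B)
    (hbound : ∀ (k : ℕ) (x : Fin k → E) (ys : ℕ → StrongDual 𝕜 F), WeaklySummable 𝕜 p ys →
      (∑ j, (∑' n, ‖ys n (T (x j))‖ ^ p) ^ (q / p)) ^ (1 / q) ≤
        B * (⨆ φ : {φ : StrongDual 𝕜 E // ‖φ‖ ≤ 1}, (∑ j, ‖φ.1 (x j)‖ ^ r) ^ (1 / r)) *
          weakNorm 𝕜 p ys) :
    ∀ x : ℕ → E, WeaklySummable 𝕜 r x → MidSummable 𝕜 q p fun j => T (x j) := by
  intro x hx ys hys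
  have hW := weakLpNorm_nonneg (𝕜 := 𝕜) r x
  have hN := weakLpNorm_nonneg (𝕜 := 𝕜) p ys
  refine summable_of_sum_range_le (c := (B * weakNorm 𝕜 r x * weakNorm 𝕜 p ys) ^ q)
    (fun _ => by positivity) fun K => ?_
  have hprefix : weakLpNorm 𝕜 r (fun j : Fin K => x j) ≤ weakNorm 𝕜 r x :=
    weakLpNorm_comp_le hr hx Fin.val_injective
  rw [weakLpNorm_fintype] at hprefix
  have hK := (hbound K (fun j => x j) ys hys).trans <|
    mul_le_mul_of_nonneg_right (mul_le_mul_of_nonneg_left hprefix hB) hN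
  rw [one_div, Real.rpow_inv_le_iff_of_pos (by positivity) (by positivity) hq] at hK
  rwa [← Fin.sum_univ_eq_sum_range fun j => (∑' n, ‖ys n (T (x j))‖ ^ p) ^ (q / p)]

end Operator

variable {𝕜 E F : Type*}

theorem stmt15_general [RCLike 𝕜] [NormedAddCommGroup E] [NormedSpace 𝕜 E]
    [NormedAddCommGroup F] [NormedSpace 𝕜 F]
    (p q r : ℝ) (hp : 1 ≤ p) (hr : 1 ≤ r) (hrq : r ≤ q) (T : E →L[𝕜] F) :
    (∀ x : ℕ → E, WeaklySummable 𝕜 r x → MidSummable 𝕜 q p fun j => T (x j)) ↔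
      ∃ B > 0, ∀ (k : ℕ) (x : Fin k → E) (ys : ℕ → StrongDual 𝕜 F), WeaklySummable 𝕜 p ys →
        (∑ j, (∑' n, ‖ys n (T (x j))‖ ^ p) ^ (q / p)) ^ (1 / q) ≤
          B * (⨆ φ : {φ : StrongDual 𝕜 E // ‖φ‖ ≤ 1}, (∑ j, ‖φ.1 (x j)‖ ^ r) ^ (1 / r)) *
            weakNorm 𝕜 p ys := by
  have hq : 0 < q := by linarith
  refine ⟨exists_bound_of_forall_midSummable hp hr hq T, ?_⟩
  rintro ⟨B, hB, hbound⟩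
  exact forall_midSummable_of_bound hr hq T hB.le hbound

/-- for `r ≤ q`, `T` sends weakly `r`-summable sequences to mid `(q,p)`-summable
sequences iff there is `B > 0` with
`(∑_{j=1}^k (∑_n |y_n^*(T x_j)|^p)^{q/p})^{1/q} ≤ B ‖(x_j)_{j=1}^k‖_{w,r} ‖(y_n^*)‖_{w,p}`
for all finite families in `E` and all weakly `p`-summable sequences in `F*`. -/
theorem stmt15 [RCLike 𝕜] [NormedAddCommGroup E] [NormedSpace 𝕜 E] [CompleteSpace E]
    [NormedAddCommGroup F] [NormedSpace 𝕜 F] [CompleteSpace F]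
    (p q r : ℝ) (hp : 1 ≤ p) (hr : 1 ≤ r) (hrq : r ≤ q) (T : E →L[𝕜] F) :
    (∀ x : ℕ → E, WeaklySummable 𝕜 r x → MidSummable 𝕜 q p fun j => T (x j)) ↔
      ∃ B > 0, ∀ (k : ℕ) (x : Fin k → E) (ys : ℕ → StrongDual 𝕜 F), WeaklySummable 𝕜 p ys →
        (∑ j, (∑' n, ‖ys n (T (x j))‖ ^ p) ^ (q / p)) ^ (1 / q) ≤
          B * (⨆ φ : {φ : StrongDual 𝕜 E // ‖φ‖ ≤ 1}, (∑ j, ‖φ.1 (x j)‖ ^ r) ^ (1 / r)) *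
            weakNorm 𝕜 p ys :=
  stmt15_general p q r hp hr hrq T
end
end
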